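/- arXiv:1304.6383 — 6 statements merged into one kernel-verified Lean document; each statement's English description precedes it below -/
import Mathlib

section
/- Suppose a_0 = 0 and for each t ≥ 0, either a_{t+1} = a_t + y_{k(t)} with a_t · y_{k(t)} ≤ λ t and ‖y_{k(t)}‖ ≤ R, or a_{t+1} = a_t. Then for all t ≥ 1, ‖a_t‖² ≤ (R² − λ) t + λ t². -/
open Finset RealInnerProductSpace

theorem norm_add_sq_le_of_inner_le {E : Type*} [NormedAddCommGroup E] [InnerProductSpace ℝ E]
    {x y : E} {c R : ℝ} (hxy : ⟪x, y⟫ ≤ c) (hy : ‖y‖ ≤ R) :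
    ‖x + y‖ ^ 2 ≤ ‖x‖ ^ 2 + R ^ 2 + 2 * c := by
  have hy_sq : ‖y‖ ^ 2 ≤ R ^ 2 := pow_le_pow_left₀ (norm_nonneg y) hy 2
  rw [norm_add_sq_real]
  linarith

theorem le_sum_range_of_sub_le {f g : ℕ → ℝ} (h0 : f 0 = 0) (h : ∀ t, f (t + 1) - f t ≤ g t)
    (t : ℕ) : f t ≤ ∑ s ∈ range t, g s := by
  have := sum_le_sum fun s (_ : s ∈ range t) => h s
  rwa [sum_range_sub, h0, sub_zero] at this

theorem sum_range_const_add_two_mul (α β : ℝ) (t : ℕ) :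
    ∑ s ∈ range t, (α + 2 * β * s) = (α - β) * t + β * t ^ 2 := by
  induction t with
  | zero => simp
  | succ t ih =>
    rw [sum_range_succ, ih]
    push_cast
    ring

theorem telescoped_norm_bound_general
    (d : ℕ) (lam R : ℝ) (hlam : 0 < lam)
    (a y : ℕ → EuclideanSpace ℝ (Fin d))
    (ha0 : a 0 = 0)
    (hstep : ∀ t : ℕ,
      (a (t+1) = a t + y t ∧ (inner ℝ (a t) (y t) : ℝ) ≤ lam * (t : ℝ) ∧ ‖y t‖ ≤ R) ∨
      a (t+1) = a t) :
    ∀ t : ℕ, 1 ≤ t → ‖a t‖^2 ≤ (R^2 - lam) * (t : ℝ) + lam * (t : ℝ)^2 := by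
  intro t _
  have step (s : ℕ) : ‖a (s + 1)‖ ^ 2 - ‖a s‖ ^ 2 ≤ R ^ 2 + 2 * lam * s := by
    rcases hstep s with ⟨hnext, hinner, hy⟩ | hstay
    · rw [hnext]
      linarith [norm_add_sq_le_of_inner_le hinner hy]
    · rw [hstay, sub_self]
      have : 0 ≤ lam * s := mul_nonneg hlam.le s.cast_nonneg
      linarith [sq_nonneg R]
  calc ‖a t‖ ^ 2 ≤ ∑ s ∈ range t, (R ^ 2 + 2 * lam * s) :=
        le_sum_range_of_sub_le (f := fun s => ‖a s‖ ^ 2) (by simp [ha0]) step t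
    _ = (R ^ 2 - lam) * t + lam * t ^ 2 := sum_range_const_add_two_mul _ _ t

theorem telescoped_norm_bound
    (d : ℕ) (lam R : ℝ) (hlam : 0 < lam) (hR : 0 < R)
    (a y : ℕ → EuclideanSpace ℝ (Fin d))
    (ha0 : a 0 = 0)
    (hstep : ∀ t : ℕ,
      (a (t+1) = a t + y t ∧ (inner ℝ (a t) (y t) : ℝ) ≤ lam * (t : ℝ) ∧ ‖y t‖ ≤ R) ∨
      a (t+1) = a t) :
    ∀ t : ℕ, 1 ≤ t → ‖a t‖^2 ≤ (R^2 - lam) * (t : ℝ) + lam * (t : ℝ)^2 :=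
  telescoped_norm_bound_general d lam R hlam a y ha0 hstep
end

section
/- Under the hypotheses of the previous statement, defining w_t = a_t/(λt) for t ≥ 1, the norm of w_t satisfies ‖w_t‖ ≤ (1/√λ) · √(1 + (R²/λ − 1)/t). In particular, ‖w_t‖ ≤ R/λ for all t ≥ 1 when R² ≥ λ, and ‖w_t‖ → at most 1/√λ as t → ∞. -/
/-!
Expanding the square, an accepted update changes `‖a‖²` by `2 ⟪a_t, y⟫ + ‖y‖² ≤ 2λt + R²`, while a
skipped step changes nothing; summing gives `‖a_t‖² ≤ λ t (t - 1) + R² t`. Dividing by `(λt)²` is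
exactly the square of the claimed bound, which is at most `R²/λ²` once `R² ≥ λ` and `t ≥ 1`.
-/

section GuardedSteps

variable {E : Type*} [NormedAddCommGroup E] [InnerProductSpace ℝ E]

theorem norm_sq_le_of_guarded_steps {lam R : ℝ} (hlam : 0 ≤ lam) {a y : ℕ → E} (ha0 : a 0 = 0)
    (hstep : ∀ t : ℕ,
      (a (t+1) = a t + y t ∧ (inner ℝ (a t) (y t) : ℝ) ≤ lam * (t : ℝ) ∧ ‖y t‖ ≤ R) ∨
      a (t+1) = a t) (t : ℕ) :
    ‖a t‖ ^ 2 ≤ lam * t * (t - 1) + R ^ 2 * t := by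
  induction t with
  | zero => simp [ha0]
  | succ t ih =>
    push_cast
    rcases hstep t with ⟨hupdate, hinner, hy⟩ | hskip
    · have hy_sq : ‖y t‖ ^ 2 ≤ R ^ 2 := pow_le_pow_left₀ (norm_nonneg _) hy 2
      rw [hupdate, norm_add_sq_real]
      nlinarith
    · rw [hskip]
      nlinarith [sq_nonneg R, (Nat.cast_nonneg t : (0:ℝ) ≤ t)]

theorem norm_smul_le_of_norm_sq_le {lam R t : ℝ} (hlam : 0 < lam) (ht : 0 < t) {a : E}
    (ha : ‖a‖ ^ 2 ≤ lam * t * (t - 1) + R ^ 2 * t) :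
    ‖(1 / (lam * t)) • a‖ ≤ 1 / Real.sqrt lam * Real.sqrt (1 + (R ^ 2 / lam - 1) / t) := by
  rw [one_div (Real.sqrt lam), ← Real.sqrt_inv, ← Real.sqrt_mul (inv_nonneg.2 hlam.le),
    ← abs_norm]
  apply Real.abs_le_sqrt
  rw [norm_smul, mul_pow, Real.norm_eq_abs, sq_abs]
  calc (1 / (lam * t)) ^ 2 * ‖a‖ ^ 2
      ≤ (1 / (lam * t)) ^ 2 * (lam * t * (t - 1) + R ^ 2 * t) := by gcongr
    _ = lam⁻¹ * (1 + (R ^ 2 / lam - 1) / t) := by field_simp; ring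

end GuardedSteps

theorem inv_sqrt_mul_sqrt_le_div {lam R t : ℝ} (hlam : 0 < lam) (hR : 0 ≤ R) (hlR : lam ≤ R ^ 2)
    (ht : 1 ≤ t) :
    1 / Real.sqrt lam * Real.sqrt (1 + (R ^ 2 / lam - 1) / t) ≤ R / lam := by
  have hexcess : 0 ≤ R ^ 2 / lam - 1 := by rw [sub_nonneg, le_div_iff₀ hlam]; linarith
  have hle : 1 + (R ^ 2 / lam - 1) / t ≤ R ^ 2 / lam := by
    linarith [div_le_self hexcess ht]
  have hsqrt_lam : Real.sqrt lam * Real.sqrt lam = lam := Real.mul_self_sqrt hlam.le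
  calc 1 / Real.sqrt lam * Real.sqrt (1 + (R ^ 2 / lam - 1) / t)
      ≤ 1 / Real.sqrt lam * Real.sqrt (R ^ 2 / lam) := by gcongr
    _ = R / lam := by
      rw [Real.sqrt_div' _ hlam.le, Real.sqrt_sq hR, div_mul_div_comm, one_mul, hsqrt_lam]

theorem weight_vector_norm_bound
    (d : ℕ) (lam R : ℝ) (hlam : 0 < lam) (hR : 0 < R)
    (a y w : ℕ → EuclideanSpace ℝ (Fin d))
    (ha0 : a 0 = 0)
    (hstep : ∀ t : ℕ,
      (a (t+1) = a t + y t ∧ (inner ℝ (a t) (y t) : ℝ) ≤ lam * (t : ℝ) ∧ ‖y t‖ ≤ R) ∨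
      a (t+1) = a t)
    (hw : ∀ t : ℕ, 1 ≤ t → w t = (1/(lam * (t : ℝ))) • a t) :
    ∀ t : ℕ, 1 ≤ t →
      ‖w t‖ ≤ (1/Real.sqrt lam) * Real.sqrt (1 + (R^2/lam - 1)/(t : ℝ)) ∧
      (lam ≤ R^2 → ‖w t‖ ≤ R/lam) := by
  intro t ht
  have ht_real : (1 : ℝ) ≤ t := by exact_mod_cast ht
  have hbound : ‖w t‖ ≤ 1 / Real.sqrt lam * Real.sqrt (1 + (R ^ 2 / lam - 1) / t) := by
    rw [hw t ht]
    exact norm_smul_le_of_norm_sq_le hlam (by linarith)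
      (norm_sq_le_of_guarded_steps hlam.le ha0 hstep t)
  exact ⟨hbound, fun hlR => hbound.trans (inv_sqrt_mul_sqrt_le_div hlam hR.le hlR ht_real)⟩
end

section
/- Suppose the training set {y_1,…,y_m} has been cycled through in exactly T complete epochs, and for each k let I_k ≤ T be the number of margin-error updates made on pattern y_k, with M = Σ_k I_k the total number of margin errors. Set C = 1/(λm), α_k = C·I_k/T, and w^T = Σ_k α_k y_k. Then 0 ≤ α_k ≤ C for all k, and min_w J(w) ≥ C·M/T − (1/2)‖w^T‖², where J(w) = (1/2)‖w‖² + C Σ_k max{0, 1 − w·y_k}. -/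
/-! Weak duality for the L1-SVM: for any `α` in the box `[0, C]^m`, the dual objective
`∑ α_k - ½‖∑ α_k y_k‖²` is a lower bound for the primal `J`. The perceptron-style averages
`α_k = C I_k / T` lie in that box because `I_k ≤ T`, and they sum to `C M / T`. -/

open Finset

lemma mul_natCast_div_natCast_le {c : ℝ} (hc : 0 ≤ c) {n T : ℕ} (h : n ≤ T) :
    c * n / T ≤ c :=
  div_le_of_le_mul₀ T.cast_nonneg hc <| by gcongr

lemma mul_le_mul_max_zero {a c : ℝ} (ha : 0 ≤ a) (hac : a ≤ c) (t : ℝ) :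
    a * t ≤ c * max 0 t :=
  calc a * t ≤ a * max 0 t := mul_le_mul_of_nonneg_left (le_max_right _ _) ha
    _ ≤ c * max 0 t := mul_le_mul_of_nonneg_right hac (le_max_left _ _)

section InnerProductSpace

variable {E : Type*} [NormedAddCommGroup E] [InnerProductSpace ℝ E]

lemma real_inner_le_half_norm_sq_add_half_norm_sq (u v : E) :
    inner ℝ u v ≤ (1 / 2) * ‖u‖ ^ 2 + (1 / 2) * ‖v‖ ^ 2 := by
  nlinarith [norm_sub_sq_real u v, sq_nonneg ‖u - v‖]

lemma hinge_dual_le_primal {ι : Type*} [Fintype ι] (y : ι → E) {C : ℝ} {α : ι → ℝ}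
    (hα : ∀ k, 0 ≤ α k ∧ α k ≤ C) (w : E) :
    ∑ k, α k - (1 / 2) * ‖∑ k, α k • y k‖ ^ 2 ≤
      (1 / 2) * ‖w‖ ^ 2 + C * ∑ k, max 0 (1 - inner ℝ w (y k)) := by
  have hinner := real_inner_le_half_norm_sq_add_half_norm_sq w (∑ k, α k • y k)
  have hlagrangian : ∑ k, α k - inner ℝ w (∑ k, α k • y k) =
      ∑ k, α k * (1 - inner ℝ w (y k)) := by
    simp only [inner_sum, real_inner_smul_right, mul_sub, mul_one, sum_sub_distrib]
  have hhinge : ∑ k, α k * (1 - inner ℝ w (y k)) ≤ C * ∑ k, max 0 (1 - inner ℝ w (y k)) := by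
    rw [mul_sum]
    exact sum_le_sum fun k _ => mul_le_mul_max_zero (hα k).1 (hα k).2 _
  linarith

end InnerProductSpace

theorem l1svm_lower_bound_after_epochs_general
    (d m T : ℕ)
    (lam : ℝ) (hlam : 0 < lam)
    (y : Fin m → EuclideanSpace ℝ (Fin d))
    (I : Fin m → ℕ) (hI : ∀ k, I k ≤ T)
    (C : ℝ) (hC : C = 1/(lam * (m : ℝ)))
    (α : Fin m → ℝ) (hα : ∀ k, α k = C * (I k : ℝ)/(T : ℝ))
    (wT : EuclideanSpace ℝ (Fin d)) (hwT : wT = ∑ k, α k • y k)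
    (M : ℕ) (hM : M = ∑ k, I k) :
    (∀ k, 0 ≤ α k ∧ α k ≤ C) ∧
    ∀ w : EuclideanSpace ℝ (Fin d),
      (1/2) * ‖w‖^2 + C * ∑ k, max 0 (1 - (inner ℝ w (y k) : ℝ)) ≥
        C * (M : ℝ)/(T : ℝ) - (1/2) * ‖wT‖^2 := by
  have hC0 : 0 ≤ C := by rw [hC]; positivity
  have hbox : ∀ k, 0 ≤ α k ∧ α k ≤ C := fun k => by
    rw [hα k]
    exact ⟨by positivity, mul_natCast_div_natCast_le hC0 (hI k)⟩
  have hsum : ∑ k, α k = C * M / T := by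
    simp only [hα, hM, Nat.cast_sum, mul_sum, sum_div]
  refine ⟨hbox, fun w => ?_⟩
  rw [ge_iff_le, ← hsum, hwT]
  exact hinge_dual_le_primal y hbox w

theorem l1svm_lower_bound_after_epochs
    (d m T : ℕ) (hm : 1 ≤ m) (hT : 1 ≤ T)
    (lam : ℝ) (hlam : 0 < lam)
    (y : Fin m → EuclideanSpace ℝ (Fin d))
    (I : Fin m → ℕ) (hI : ∀ k, I k ≤ T)
    (C : ℝ) (hC : C = 1/(lam * (m : ℝ)))
    (α : Fin m → ℝ) (hα : ∀ k, α k = C * (I k : ℝ)/(T : ℝ))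
    (wT : EuclideanSpace ℝ (Fin d)) (hwT : wT = ∑ k, α k • y k)
    (M : ℕ) (hM : M = ∑ k, I k) :
    (∀ k, 0 ≤ α k ∧ α k ≤ C) ∧
    ∀ w : EuclideanSpace ℝ (Fin d),
      (1/2) * ‖w‖^2 + C * ∑ k, max 0 (1 - (inner ℝ w (y k) : ℝ)) ≥
        C * (M : ℝ)/(T : ℝ) - (1/2) * ‖wT‖^2 :=
  l1svm_lower_bound_after_epochs_general d m T lam hlam y I hI C hC α hα wT hwT M hM
end

section
/- With the step dynamics as above, suppose ‖y‖² ≤ λ and (ℓ₁−1)λ < P ≤ ℓ₁λ for some integer 1 ≤ ℓ₁ ≤ ℓ−1. Then among ℓ consecutive steps starting from P, exactly the first ℓ₁ steps are minus-steps and the remaining ℓ − ℓ₁ steps are plus-steps; hence ℓ_+ = ℓ − ℓ₁. -/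
/-- One step of the threshold dynamics: a plus-step (margin error) occurs iff
the current value `P ≤ 0`, adding `s - lam` (where `s = ‖y‖²`); otherwise a
minus-step adds `-lam`. -/
noncomputable def svmStep (s lam P : ℝ) : ℝ := if P ≤ 0 then P + (s - lam) else P - lam

/-- Number of plus-steps among `n` consecutive steps starting from `P`. -/
noncomputable def plusCount (s lam : ℝ) : ℝ → ℕ → ℕ
  | _, 0 => 0
  | P, n+1 => (if P ≤ 0 then 1 else 0) + plusCount s lam (svmStep s lam P) n

lemma plusCount_add (s lam : ℝ) (m : ℕ) : ∀ (P : ℝ) (n : ℕ),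
    plusCount s lam P (m + n)
      = plusCount s lam P m + plusCount s lam ((svmStep s lam)^[m] P) n := by
  induction m with
  | zero => intro P n; simp [plusCount]
  | succ k ih =>
      intro P n
      rw [Nat.succ_add]
      simp only [plusCount, Function.iterate_succ_apply]
      rw [ih (svmStep s lam P) n, Nat.add_assoc]

lemma iterate_pos_sub (s lam P : ℝ) (hlam : 0 ≤ lam) (ℓ₁ : ℕ)
    (hPl : ((ℓ₁ : ℝ) - 1) * lam < P) :
    ∀ i ≤ ℓ₁, (svmStep s lam)^[i] P = P - i * lam := by
  intro i hi
  induction i with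
  | zero => simp
  | succ k ih =>
      have hk : k ≤ ℓ₁ := Nat.le_of_succ_le hi
      have hkv := ih hk
      rw [Function.iterate_succ_apply', hkv, svmStep]
      have hcast : (k : ℝ) ≤ (ℓ₁ : ℝ) - 1 := by
        have : (k : ℝ) + 1 ≤ (ℓ₁ : ℝ) := by exact_mod_cast hi
        linarith
      have hpos : 0 < P - k * lam := by nlinarith [mul_le_mul_of_nonneg_right hcast hlam]
      rw [if_neg (by linarith)]
      push_cast; ring

lemma iterate_nonpos (s lam Q : ℝ) (hs : 0 ≤ s) (hsl : s ≤ lam) (hQ : Q ≤ 0) :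
    ∀ k, (svmStep s lam)^[k] Q ≤ 0 := by
  intro k
  induction k with
  | zero => simpa
  | succ n ih =>
      rw [Function.iterate_succ_apply', svmStep, if_pos ih]
      linarith

lemma plusCount_of_nonpos (s lam : ℝ) (hs : 0 ≤ s) (hsl : s ≤ lam) :
    ∀ (n : ℕ) (Q : ℝ), Q ≤ 0 → plusCount s lam Q n = n := by
  intro n
  induction n with
  | zero => intro Q _; rfl
  | succ k ih =>
      intro Q hQ
      have hQ' : svmStep s lam Q ≤ 0 := by rw [svmStep, if_pos hQ]; linarith
      simp [plusCount, if_pos hQ, ih _ hQ']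
      omega

lemma plusCount_of_pos (s lam : ℝ) :
    ∀ (n : ℕ) (P : ℝ), (∀ i < n, 0 < (svmStep s lam)^[i] P) → plusCount s lam P n = 0 := by
  intro n
  induction n with
  | zero => intro P _; rfl
  | succ k ih =>
      intro P hP
      have h0 : 0 < P := by simpa using hP 0 (Nat.succ_pos k)
      have h1 : ∀ i < k, 0 < (svmStep s lam)^[i] (svmStep s lam P) := by
        intro i hi
        have := hP (i + 1) (Nat.succ_lt_succ hi)
        rwa [Function.iterate_succ_apply] at this
      simp [plusCount, if_neg (not_le.mpr h0), ih _ h1]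

theorem minus_then_plus_steps_small_norm
    (d : ℕ) (lam : ℝ) (hlam : 0 < lam) (y : EuclideanSpace ℝ (Fin d))
    (hy : ‖y‖^2 ≤ lam) (ℓ ℓ₁ : ℕ) (hℓ : 2 ≤ ℓ) (hℓ₁ : 1 ≤ ℓ₁) (hℓ₁ℓ : ℓ₁ ≤ ℓ - 1)
    (P : ℝ) (hPl : ((ℓ₁ : ℝ) - 1) * lam < P) (hPu : P ≤ (ℓ₁ : ℝ) * lam) :
    (∀ i < ℓ₁, 0 < (svmStep (‖y‖^2) lam)^[i] P) ∧
    (∀ i, ℓ₁ ≤ i → i < ℓ → (svmStep (‖y‖^2) lam)^[i] P ≤ 0) ∧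
    plusCount (‖y‖^2) lam P ℓ = ℓ - ℓ₁ := by
  set s := ‖y‖^2 with hsdef
  have hs : 0 ≤ s := by positivity
  have hiter := iterate_pos_sub s lam P hlam.le ℓ₁ hPl
  have hpos : ∀ i < ℓ₁, 0 < (svmStep s lam)^[i] P := by
    intro i hi
    rw [hiter i hi.le]
    have hcast : (i : ℝ) ≤ (ℓ₁ : ℝ) - 1 := by
      have : (i : ℝ) + 1 ≤ (ℓ₁ : ℝ) := by exact_mod_cast hi
      linarith
    nlinarith [mul_le_mul_of_nonneg_right hcast hlam.le]
  have hQ : (svmStep s lam)^[ℓ₁] P ≤ 0 := by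
    rw [hiter ℓ₁ le_rfl]; nlinarith
  have hnonpos : ∀ i, ℓ₁ ≤ i → i < ℓ → (svmStep s lam)^[i] P ≤ 0 := by
    intro i hi _
    obtain ⟨k, rfl⟩ := Nat.exists_eq_add_of_le hi
    rw [Nat.add_comm, Function.iterate_add_apply]
    exact iterate_nonpos s lam _ hs hy hQ k
  refine ⟨hpos, hnonpos, ?_⟩
  have hℓ' : ℓ₁ ≤ ℓ := le_trans hℓ₁ℓ (Nat.sub_le ℓ 1)
  have hsplit : ℓ = ℓ₁ + (ℓ - ℓ₁) := (Nat.add_sub_cancel' hℓ').symm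
  rw [hsplit, plusCount_add, plusCount_of_pos s lam ℓ₁ P hpos,
    plusCount_of_nonpos s lam hs hy (ℓ - ℓ₁) _ hQ]
  omega
end

section
/- With the step dynamics as above and ‖y‖² > λ, suppose (ℓ−ℓ₁−1)λ − ℓ₁(‖y‖² − λ) < P ≤ (ℓ−ℓ₁)λ − (ℓ₁−1)(‖y‖² − λ) for some integer 1 ≤ ℓ₁ ≤ ℓ−1. Then among ℓ consecutive steps starting from P exactly ℓ₁ are plus-steps, i.e., ℓ_+ = ℓ₁. -/
lemma plusCount_key (s lam : ℝ) (hlam : 0 < lam) (hs : lam < s) :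
    ∀ n k : ℕ, k ≤ n → ∀ P : ℝ,
      ((n : ℝ) - k - 1) * lam - (k : ℝ) * (s - lam) < P →
      P ≤ ((n : ℝ) - k) * lam - ((k : ℝ) - 1) * (s - lam) →
      plusCount s lam P n = k := by
  intro n
  induction n with
  | zero =>
    intro k hk P h1 h2
    interval_cases k
    simp [plusCount]
  | succ n ih =>
    intro k hk P h1 h2
    by_cases hP : P ≤ 0
    · obtain ⟨k', rfl⟩ : ∃ k', k = k' + 1 := by
        rcases k with _ | k'
        · exfalso
          have hn : (0 : ℝ) ≤ (n : ℝ) := Nat.cast_nonneg n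
          push_cast at h1
          nlinarith
        · exact ⟨k', rfl⟩
      have hk' : k' ≤ n := by omega
      simp only [plusCount, svmStep, hP, if_pos]
      rw [ih k' hk' (P + (s - lam)) (by push_cast at h1 ⊢; linarith)
        (by push_cast at h2 ⊢; linarith)]
      omega
    · have hkn : k ≤ n := by
        rcases Nat.lt_or_ge k (n + 1) with h | h
        · omega
        · exfalso
          have : k = n + 1 := by omega
          subst this
          have ha : (0 : ℝ) < s - lam := by linarith
          have hn : (0 : ℝ) ≤ (n : ℝ) := Nat.cast_nonneg n
          push_cast at h2
          nlinarith
      simp only [plusCount, svmStep, hP, if_neg, not_false_iff]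
      rw [ih k hkn (P - lam) (by push_cast at h1 ⊢; linarith)
        (by push_cast at h2 ⊢; linarith)]
      omega

theorem plus_steps_count_large_norm_interval
    (d : ℕ) (lam : ℝ) (hlam : 0 < lam) (y : EuclideanSpace ℝ (Fin d))
    (hy : lam < ‖y‖^2) (ℓ ℓ₁ : ℕ) (hℓ : 2 ≤ ℓ) (hℓ₁ : 1 ≤ ℓ₁) (hℓ₁ℓ : ℓ₁ ≤ ℓ - 1)
    (P : ℝ)
    (hPl : ((ℓ : ℝ) - (ℓ₁ : ℝ) - 1) * lam - (ℓ₁ : ℝ) * (‖y‖^2 - lam) < P)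
    (hPu : P ≤ ((ℓ : ℝ) - (ℓ₁ : ℝ)) * lam - ((ℓ₁ : ℝ) - 1) * (‖y‖^2 - lam)) :
    plusCount (‖y‖^2) lam P ℓ = ℓ₁ := by
  exact plusCount_key (‖y‖^2) lam hlam hy ℓ ℓ₁ (by omega) P hPl hPu
end

section
/- Monotone effect of the threshold dynamics: in the step dynamics where a step at current value P adds ‖y‖² − λ if P ≤ 0 and adds −λ if P > 0, the number ℓ_+ of plus-steps among ℓ consecutive steps is a non-increasing function of the initial value P (for fixed λ, ‖y‖, ℓ). -/
lemma plusCount_key_s17 (s lam : ℝ) : ∀ n : ℕ,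
    (∀ P P' : ℝ, P ≤ P' → plusCount s lam P' n ≤ plusCount s lam P n) ∧
    (∀ P P' : ℝ, P' ≤ P + s → plusCount s lam P n ≤ plusCount s lam P' n + 1) := by
  intro n
  induction n with
  | zero => simp [plusCount]
  | succ n ih =>
    obtain ⟨C, D⟩ := ih
    constructor
    · intro P P' h
      simp only [plusCount, svmStep]
      by_cases hP : P ≤ 0 <;> by_cases hP' : P' ≤ 0 <;> simp [hP, hP']
      · exact C (P + (s - lam)) (P' + (s - lam)) (by linarith)
      · have := D (P' - lam) (P + (s - lam)) (by linarith)
        omega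
      · linarith
      · exact C (P - lam) (P' - lam) (by linarith)
    · intro P P' h
      simp only [plusCount, svmStep]
      by_cases hP : P ≤ 0 <;> by_cases hP' : P' ≤ 0 <;> simp [hP, hP']
      · have := D (P + (s - lam)) (P' + (s - lam)) (by linarith)
        omega
      · have := C (P' - lam) (P + (s - lam)) (by linarith)
        omega
      · have := D (P - lam) (P' + (s - lam)) (by linarith)
        omega
      · have := D (P - lam) (P' - lam) (by linarith)
        omega

theorem plusCount_antitone_in_initial_value
    (d : ℕ) (lam : ℝ) (hlam : 0 < lam) (y : EuclideanSpace ℝ (Fin d))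
    (ℓ : ℕ) (hℓ : 1 ≤ ℓ) :
    ∀ P P' : ℝ, P ≤ P' →
      plusCount (‖y‖^2) lam P' ℓ ≤ plusCount (‖y‖^2) lam P ℓ := by
  intro P P' h
  exact (plusCount_key_s17 _ _ ℓ).1 P P' h
end
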